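/- arXiv:2306.15011 — 5 statements merged into one kernel-verified Lean document; each statement's English description precedes it below -/
import Mathlib

section
/- The condition f(0) > 0, where f(I1) = N − I1 − φ(I1) − εψ(I1) − Nγ1/β1, is equivalent to the inequality (β1/γ1)·(γ2+σ2)⁻¹·((1−ε)β2 + εγ2 + σ2) > β2/γ2, i.e., R12 > 1 where R12 = (R1/R2)·((1−ε)β2 + εγ2 + σ2)/(γ2+σ2). -/
/-!
At `I1 = 0` both denominators equal `β2 N (γ2 + σ2)`, so `f 0` collapses to `N` times
`γ2 / β2 · ((1 - ε) β2 + ε γ2 + σ2) / (γ2 + σ2) - γ1 / β1`; since `γ1 / β1 = 1 / R1 > 0`,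
its sign is that of `R12 - 1`.
-/

theorem f_zero_eq {N β1 β2 γ1 γ2 σ2 ε : ℝ} {φ ψ f : ℝ → ℝ}
    (hN : N ≠ 0) (hβ2 : β2 ≠ 0) (hγσ : γ2 + σ2 ≠ 0)
    (hφ : ∀ I1, φ I1 = (N * (β2 - γ2) - β2 * I1) * (β1 * (1 - ε) * I1 + N * σ2) /
          (β2 * (β1 * (1 - ε) * I1 + N * (γ2 + σ2))))
    (hψ : ∀ I1, ψ I1 = N * γ2 * (N * (β2 - γ2) - β2 * I1) /
          (β2 * (β1 * (1 - ε) * I1 + N * (γ2 + σ2))))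
    (hf : ∀ I1, f I1 = N - I1 - φ I1 - ε * ψ I1 - N * γ1 / β1) :
    f 0 = N * (γ2 / β2 * (((1 - ε) * β2 + ε * γ2 + σ2) / (γ2 + σ2)) - γ1 / β1) := by
  rw [hf, hφ, hψ]
  field_simp
  ring

theorem f_zero_pos_iff_R12_gt_one_general
    (N β1 β2 γ1 γ2 σ2 ε : ℝ)
    (hN : 0 < N) (hβ1 : 0 < β1) (hβ2 : 0 < β2) (hγ1 : 0 < γ1) (hγ2 : 0 < γ2)
    (hσ2 : 0 < σ2)
    (φ ψ f : ℝ → ℝ)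
    (hφ : ∀ I1, φ I1 = (N * (β2 - γ2) - β2 * I1) * (β1 * (1 - ε) * I1 + N * σ2) /
          (β2 * (β1 * (1 - ε) * I1 + N * (γ2 + σ2))))
    (hψ : ∀ I1, ψ I1 = N * γ2 * (N * (β2 - γ2) - β2 * I1) /
          (β2 * (β1 * (1 - ε) * I1 + N * (γ2 + σ2))))
    (hf : ∀ I1, f I1 = N - I1 - φ I1 - ε * ψ I1 - N * γ1 / β1) :
    0 < f 0 ↔ 1 < ((β1 / γ1) / (β2 / γ2)) * (((1 - ε) * β2 + ε * γ2 + σ2) / (γ2 + σ2)) := by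
  set K := ((1 - ε) * β2 + ε * γ2 + σ2) / (γ2 + σ2)
  have hR12 : (β1 / γ1) / (β2 / γ2) * K = γ2 / β2 * K / (γ1 / β1) := by
    field_simp
  rw [f_zero_eq hN.ne' hβ2.ne' (by positivity) hφ hψ hf, mul_pos_iff_of_pos_left hN, sub_pos,
    hR12, one_lt_div (by positivity)]

theorem f_zero_pos_iff_R12_gt_one
    (N β1 β2 γ1 γ2 σ2 ε : ℝ)
    (hN : 0 < N) (hβ1 : 0 < β1) (hβ2 : 0 < β2) (hγ1 : 0 < γ1) (hγ2 : 0 < γ2)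
    (hσ2 : 0 < σ2) (hβ2γ2 : β2 > γ2) (hε0 : 0 ≤ ε) (hε1 : ε ≤ 1)
    (φ ψ f : ℝ → ℝ)
    (hφ : ∀ I1, φ I1 = (N * (β2 - γ2) - β2 * I1) * (β1 * (1 - ε) * I1 + N * σ2) /
          (β2 * (β1 * (1 - ε) * I1 + N * (γ2 + σ2))))
    (hψ : ∀ I1, ψ I1 = N * γ2 * (N * (β2 - γ2) - β2 * I1) /
          (β2 * (β1 * (1 - ε) * I1 + N * (γ2 + σ2))))
    (hf : ∀ I1, f I1 = N - I1 - φ I1 - ε * ψ I1 - N * γ1 / β1) :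
    0 < f 0 ↔ 1 < ((β1 / γ1) / (β2 / γ2)) * (((1 - ε) * β2 + ε * γ2 + σ2) / (γ2 + σ2)) :=
  f_zero_pos_iff_R12_gt_one_general N β1 β2 γ1 γ2 σ2 ε hN hβ1 hβ2 hγ1 hγ2 hσ2 φ ψ f hφ hψ hf
end

section
/- The function g(I1) = Nγ1 I1/(Nσ1 + β2 φ(I1)) satisfies g(0) = 0 and is strictly increasing on [0, N(1−1/R2)). -/
/-!
Write `A = N(β₂ - γ₂)`, `S = Nσ₁`, `c = β₁(1 - ε)` and `r(x) = (c x + Nσ₂) / (c x + N(γ₂ + σ₂))`,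
so that `g(x) = Nγ₁ x / D(x)` with `D(x) = S + (A - β₂ x) r(x)`, which is positive for
`0 ≤ x < A / β₂ = N(1 - 1/R₂)`. For `0 ≤ a < b`,
`b D(a) - a D(b) = (b - a) S + A (b r(a) - a r(b)) + β₂ a b (r(b) - r(a))`,
and both brackets are nonnegative because `r` is increasing while `r(x)/x` is decreasing.
-/

lemma monotoneOn_affine_div_affine {c d e : ℝ} (hc : 0 ≤ c) (hde : d ≤ e) (he : 0 < e) :
    MonotoneOn (fun x => (c * x + d) / (c * x + e)) (Set.Ici 0) := by
  intro a (ha : 0 ≤ a) b (hb : 0 ≤ b) hab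
  rw [div_le_div_iff₀ (by positivity) (by positivity)]
  nlinarith [mul_nonneg (mul_nonneg hc (sub_nonneg.2 hde)) (sub_nonneg.2 hab)]

lemma mul_affine_div_affine_le {c d e a b : ℝ} (hc : 0 ≤ c) (hd : 0 ≤ d) (he : 0 < e)
    (ha : 0 ≤ a) (hab : a ≤ b) :
    a * ((c * b + d) / (c * b + e)) ≤ b * ((c * a + d) / (c * a + e)) := by
  have hb : 0 ≤ b := ha.trans hab
  rw [mul_div_assoc', mul_div_assoc', div_le_div_iff₀ (by positivity) (by positivity)]
  have hba : 0 ≤ b - a := sub_nonneg.2 hab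
  have key : b * (c * a + d) * (c * b + e) - a * (c * b + d) * (c * a + e) =
      (b - a) * (c * c * a * b + c * d * (a + b) + d * e) := by ring
  nlinarith [mul_nonneg hba (by positivity : 0 ≤ c * c * a * b + c * d * (a + b) + d * e)]

lemma mul_add_sub_mul_lt {S A β a b : ℝ} {ρ : ℝ → ℝ} (hS : 0 < S) (hA : 0 ≤ A) (hβ : 0 ≤ β)
    (ha : 0 ≤ a) (hab : a < b) (hρ : ρ a ≤ ρ b) (hρx : a * ρ b ≤ b * ρ a) :
    a * (S + (A - β * b) * ρ b) < b * (S + (A - β * a) * ρ a) := by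
  have key : b * (S + (A - β * a) * ρ a) - a * (S + (A - β * b) * ρ b) =
      (b - a) * S + A * (b * ρ a - a * ρ b) + β * a * b * (ρ b - ρ a) := by ring
  have hb : 0 ≤ b := ha.trans hab.le
  nlinarith [mul_pos (sub_pos.2 hab) hS, mul_nonneg hA (sub_nonneg.2 hρx),
    mul_nonneg (mul_nonneg (mul_nonneg hβ ha) hb) (sub_nonneg.2 hρ)]

lemma strictMonoOn_mul_div_of_mul_lt {s : Set ℝ} {k : ℝ} {D : ℝ → ℝ} (hk : 0 < k)
    (hD : ∀ x ∈ s, 0 < D x) (h : ∀ a ∈ s, ∀ b ∈ s, a < b → a * D b < b * D a) :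
    StrictMonoOn (fun x => k * x / D x) s := by
  intro a ha b hb hab
  rw [div_lt_div_iff₀ (hD a ha) (hD b hb)]
  have := mul_lt_mul_of_pos_left (h a ha b hb hab) hk
  linarith

theorem g_zero_and_strict_mono_general
    (N β1 β2 γ1 γ2 σ1 σ2 ε : ℝ)
    (hN : 0 < N) (hβ1 : 0 < β1) (hβ2 : 0 < β2) (hγ1 : 0 < γ1) (hγ2 : 0 < γ2)
    (hσ1 : 0 < σ1) (hσ2 : 0 < σ2) (hβ2γ2 : β2 > γ2) (hε1 : ε ≤ 1)
    (φ g : ℝ → ℝ)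
    (hφ : ∀ I1, φ I1 = (N * (β2 - γ2) - β2 * I1) * (β1 * (1 - ε) * I1 + N * σ2) /
          (β2 * (β1 * (1 - ε) * I1 + N * (γ2 + σ2))))
    (hg : ∀ I1, g I1 = N * γ1 * I1 / (N * σ1 + β2 * φ I1)) :
    g 0 = 0 ∧ StrictMonoOn g (Set.Ico 0 (N * (1 - 1 / (β2 / γ2)))) := by
  set c := β1 * (1 - ε)
  set r := fun x => (c * x + N * σ2) / (c * x + N * (γ2 + σ2)) with hr
  have hc : 0 ≤ c := mul_nonneg hβ1.le (sub_nonneg.2 hε1)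
  have hA : 0 < N * (β2 - γ2) := mul_pos hN (sub_pos.2 hβ2γ2)
  have hg_eq : g = fun x => N * γ1 * x / (N * σ1 + (N * (β2 - γ2) - β2 * x) * r x) := by
    funext x
    simp only [hg, hφ, hr]
    rw [← mul_div_mul_left (c * x + N * σ2) _ hβ2.ne']
    ring
  have hbound : N * (1 - 1 / (β2 / γ2)) = N * (β2 - γ2) / β2 := by field_simp
  refine ⟨by simp [hg], ?_⟩
  rw [hg_eq, hbound]
  refine strictMonoOn_mul_div_of_mul_lt (by positivity) ?_ ?_
  · rintro x ⟨hx0, hxA⟩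
    have hgap : 0 < N * (β2 - γ2) - β2 * x := by rw [lt_div_iff₀ hβ2] at hxA; linarith
    have hr_nonneg : 0 ≤ r x := by positivity
    positivity
  · rintro a ⟨ha, -⟩ b ⟨hb, -⟩ hab
    exact mul_add_sub_mul_lt (by positivity) hA.le hβ2.le ha hab
      (monotoneOn_affine_div_affine hc (by nlinarith) (by positivity) ha hb hab.le)
      (mul_affine_div_affine_le hc (by positivity) (by positivity) ha hab.le)

theorem g_zero_and_strict_mono
    (N β1 β2 γ1 γ2 σ1 σ2 ε : ℝ)
    (hN : 0 < N) (hβ1 : 0 < β1) (hβ2 : 0 < β2) (hγ1 : 0 < γ1) (hγ2 : 0 < γ2)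
    (hσ1 : 0 < σ1) (hσ2 : 0 < σ2) (hβ2γ2 : β2 > γ2) (hε0 : 0 ≤ ε) (hε1 : ε ≤ 1)
    (φ g : ℝ → ℝ)
    (hφ : ∀ I1, φ I1 = (N * (β2 - γ2) - β2 * I1) * (β1 * (1 - ε) * I1 + N * σ2) /
          (β2 * (β1 * (1 - ε) * I1 + N * (γ2 + σ2))))
    (hg : ∀ I1, g I1 = N * γ1 * I1 / (N * σ1 + β2 * φ I1)) :
    g 0 = 0 ∧ StrictMonoOn g (Set.Ico 0 (N * (1 - 1 / (β2 / γ2)))) :=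
  g_zero_and_strict_mono_general N β1 β2 γ1 γ2 σ1 σ2 ε hN hβ1 hβ2 hγ1 hγ2 hσ1 hσ2 hβ2γ2 hε1 φ g hφ
    hg
end

section
/- At I1* = N(1 − 1/R2) = N(β2−γ2)/β2, the inequality g(I1*) > f(I1*) holds if and only if (β2/γ2)·(β1+σ1)/(γ1+σ1) > β1/γ1, i.e., R21 > 1 where R21 = (R2/R1)·(β1+σ1)/(γ1+σ1). -/
/-!
At `I1* = N (β2 - γ2) / β2` the common factor `N (β2 - γ2) - β2 I1` of `φ` and `ψ` vanishes, so
`g(I1*) = γ1 I1* / σ1` and `f(I1*) = N γ2 / β2 - N γ1 / β1`. Clearing the positive denominators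
`β1 β2 σ1 / N` turns `g(I1*) > f(I1*)` into `γ2 β1 (γ1 + σ1) < β2 γ1 (β1 + σ1)`, which is `R21 > 1`.
-/

lemma one_lt_R21_iff {β1 β2 γ1 γ2 σ1 : ℝ} (hβ1 : 0 < β1) (hγ1 : 0 < γ1) (hγ2 : 0 < γ2)
    (hσ1 : 0 < σ1) :
    1 < ((β2 / γ2) / (β1 / γ1)) * ((β1 + σ1) / (γ1 + σ1)) ↔
      γ2 * β1 * (γ1 + σ1) < β2 * γ1 * (β1 + σ1) := by
  have hR21 : ((β2 / γ2) / (β1 / γ1)) * ((β1 + σ1) / (γ1 + σ1))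
      = β2 * γ1 * (β1 + σ1) / (γ2 * β1 * (γ1 + σ1)) := by
    field_simp
  rw [hR21, one_lt_div (by positivity)]

lemma sub_sub_lt_div_iff_at_threshold {N β1 β2 γ1 γ2 σ1 : ℝ} (hN : 0 < N) (hβ1 : 0 < β1)
    (hβ2 : 0 < β2) (hσ1 : 0 < σ1) :
    N - N * (β2 - γ2) / β2 - N * γ1 / β1 < γ1 * (N * (β2 - γ2) / β2) / σ1 ↔
      γ2 * β1 * (γ1 + σ1) < β2 * γ1 * (β1 + σ1) := by
  have hscale : 0 < N / (β1 * β2 * σ1) := by positivity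
  have hlhs : N - N * (β2 - γ2) / β2 - N * γ1 / β1
      = N / (β1 * β2 * σ1) * (γ2 * β1 * σ1 - β2 * γ1 * σ1) := by
    field_simp; ring
  have hrhs : γ1 * (N * (β2 - γ2) / β2) / σ1
      = N / (β1 * β2 * σ1) * (β1 * γ1 * (β2 - γ2)) := by
    field_simp
  rw [hlhs, hrhs, mul_lt_mul_iff_right₀ hscale]
  constructor <;> intro h <;> linarith

theorem g_gt_f_at_I1star_iff_R21_gt_one_general
    (N β1 β2 γ1 γ2 σ1 σ2 ε : ℝ)
    (hN : 0 < N) (hβ1 : 0 < β1) (hβ2 : 0 < β2) (hγ1 : 0 < γ1) (hγ2 : 0 < γ2)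
    (hσ1 : 0 < σ1)
    (φ ψ f g : ℝ → ℝ)
    (hφ : ∀ I1, φ I1 = (N * (β2 - γ2) - β2 * I1) * (β1 * (1 - ε) * I1 + N * σ2) /
          (β2 * (β1 * (1 - ε) * I1 + N * (γ2 + σ2))))
    (hψ : ∀ I1, ψ I1 = N * γ2 * (N * (β2 - γ2) - β2 * I1) /
          (β2 * (β1 * (1 - ε) * I1 + N * (γ2 + σ2))))
    (hf : ∀ I1, f I1 = N - I1 - φ I1 - ε * ψ I1 - N * γ1 / β1)
    (hg : ∀ I1, g I1 = N * γ1 * I1 / (N * σ1 + β2 * φ I1))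
    (I1star : ℝ) (hI1star : I1star = N * (β2 - γ2) / β2) :
    g I1star > f I1star ↔
      1 < ((β2 / γ2) / (β1 / γ1)) * ((β1 + σ1) / (γ1 + σ1)) := by
  have hroot : N * (β2 - γ2) - β2 * I1star = 0 := by
    rw [hI1star, mul_div_cancel₀ _ hβ2.ne', sub_self]
  have hφ0 : φ I1star = 0 := by rw [hφ, hroot, zero_mul, zero_div]
  have hψ0 : ψ I1star = 0 := by rw [hψ, hroot, mul_zero, zero_div]
  have hg' : g I1star = γ1 * I1star / σ1 := by
    rw [hg, hφ0, mul_zero, add_zero, mul_assoc, mul_div_mul_left _ _ hN.ne']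
  rw [gt_iff_lt, hf, hφ0, hψ0, mul_zero, sub_zero, sub_zero, hg', hI1star,
    sub_sub_lt_div_iff_at_threshold hN hβ1 hβ2 hσ1, one_lt_R21_iff hβ1 hγ1 hγ2 hσ1]

theorem g_gt_f_at_I1star_iff_R21_gt_one
    (N β1 β2 γ1 γ2 σ1 σ2 ε : ℝ)
    (hN : 0 < N) (hβ1 : 0 < β1) (hβ2 : 0 < β2) (hγ1 : 0 < γ1) (hγ2 : 0 < γ2)
    (hσ1 : 0 < σ1) (hσ2 : 0 < σ2) (hβ2γ2 : β2 > γ2) (hε0 : 0 ≤ ε) (hε1 : ε ≤ 1)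
    (φ ψ f g : ℝ → ℝ)
    (hφ : ∀ I1, φ I1 = (N * (β2 - γ2) - β2 * I1) * (β1 * (1 - ε) * I1 + N * σ2) /
          (β2 * (β1 * (1 - ε) * I1 + N * (γ2 + σ2))))
    (hψ : ∀ I1, ψ I1 = N * γ2 * (N * (β2 - γ2) - β2 * I1) /
          (β2 * (β1 * (1 - ε) * I1 + N * (γ2 + σ2))))
    (hf : ∀ I1, f I1 = N - I1 - φ I1 - ε * ψ I1 - N * γ1 / β1)
    (hg : ∀ I1, g I1 = N * γ1 * I1 / (N * σ1 + β2 * φ I1))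
    (I1star : ℝ) (hI1star : I1star = N * (β2 - γ2) / β2) :
    g I1star > f I1star ↔
      1 < ((β2 / γ2) / (β1 / γ1)) * ((β1 + σ1) / (γ1 + σ1)) :=
  g_gt_f_at_I1star_iff_R21_gt_one_general N β1 β2 γ1 γ2 σ1 σ2 ε hN hβ1 hβ2 hγ1 hγ2 hσ1 φ ψ f g hφ hψ
    hf hg I1star hI1star
end

section
/- On the region I2 + εR2 < N(1 − 1/R1) with I2, R2 ≥ 0, the partial derivative of ω with respect to I2 equals Nγ1·(1 + β2 ω(I2,R2)/(β2 I2 + Nσ1))/(β2 I2 + N(γ1+σ1)) − 1, and consequently ∂ω/∂I2 + 1 > 0. -/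
lemma sub_mul_pos_of_lt_mul_one_sub_inv {N β γ x : ℝ} (hβ : 0 < β)
    (h : x < N * (1 - 1 / (β / γ))) : 0 < N * (β - γ) - β * x := by
  have hscaled : β * x < β * (N * (1 - 1 / (β / γ))) := mul_lt_mul_of_pos_left h hβ
  have hthreshold : β * (N * (1 - 1 / (β / γ))) = N * (β - γ) := by
    rw [one_div_div]
    field_simp
  linarith

/-- Writing the denominator as `s + (c - q)` with `s = b y + q`, the term `-s / (b y + c)` of the
quotient rule becomes `(c - q) / (b y + c) - 1`. -/
lemma hasDerivAt_linear_mul_linear_div {f : ℝ → ℝ} {a b p q c x : ℝ}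
    (hf : ∀ y, f y = (p - a * y) * (b * y + q) / (a * (b * y + c)))
    (ha : a ≠ 0) (hq : b * x + q ≠ 0) (hc : b * x + c ≠ 0) :
    HasDerivAt f ((c - q) * (1 + b * f x / (b * x + q)) / (b * x + c) - 1) x := by
  have hlin : ∀ m n : ℝ, HasDerivAt (fun y => m * y + n) m x := fun m n => by
    simpa using ((hasDerivAt_id x).const_mul m).add_const n
  have hnum : HasDerivAt (fun y => (p - a * y) * (b * y + q))
      (-a * (b * x + q) + (p - a * x) * b) x := by
    have hfst : HasDerivAt (fun y => p - a * y) (-a) x := by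
      simpa [sub_eq_add_neg, add_comm] using hlin (-a) p
    exact hfst.mul (hlin b q)
  have hden : HasDerivAt (fun y => a * (b * y + c)) (a * b) x := (hlin b c).const_mul a
  rw [show f = fun y => (p - a * y) * (b * y + q) / (a * (b * y + c)) from funext hf]
  refine (hnum.div hden (mul_ne_zero ha hc)).congr_deriv ?_
  dsimp only
  field_simp
  ring

theorem omega_deriv_I2_general
    (N β1 β2 γ1 σ1 ε : ℝ)
    (hN : 0 < N) (hβ1 : 0 < β1) (hβ2 : 0 < β2) (hγ1 : 0 < γ1) (hσ1 : 0 < σ1)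
    (ω : ℝ → ℝ → ℝ)
    (hω : ∀ i r, ω i r = (N * (β1 - γ1) - β1 * i - β1 * ε * r) * (β2 * i + N * σ1) /
        (β1 * (β2 * i + N * (γ1 + σ1))))
    (I2 R2 : ℝ) (hI2 : 0 ≤ I2)
    (hreg : I2 + ε * R2 < N * (1 - 1 / (β1 / γ1))) :
    HasDerivAt (fun i => ω i R2)
      (N * γ1 * (1 + β2 * ω I2 R2 / (β2 * I2 + N * σ1)) / (β2 * I2 + N * (γ1 + σ1)) - 1)
      I2 ∧
    0 < N * γ1 * (1 + β2 * ω I2 R2 / (β2 * I2 + N * σ1)) / (β2 * I2 + N * (γ1 + σ1)) - 1 + 1 := by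
  have hs : 0 < β2 * I2 + N * σ1 := by positivity
  have hc : 0 < β2 * I2 + N * (γ1 + σ1) := by positivity
  have hnum : 0 < N * (β1 - γ1) - β1 * I2 - β1 * ε * R2 := by
    linarith [sub_mul_pos_of_lt_mul_one_sub_inv hβ1 hreg]
  have hωpos : 0 < ω I2 R2 := by
    rw [hω]
    positivity
  refine ⟨?_, by rw [sub_add_cancel]; positivity⟩
  have hderiv := hasDerivAt_linear_mul_linear_div (p := N * (β1 - γ1) - β1 * ε * R2)
    (fun i => (hω i R2).trans (by ring)) hβ1.ne' hs.ne' hc.ne'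
  rwa [show N * (γ1 + σ1) - N * σ1 = N * γ1 by ring] at hderiv

theorem omega_deriv_I2
    (N β1 β2 γ1 σ1 ε : ℝ)
    (hN : 0 < N) (hβ1 : 0 < β1) (hβ2 : 0 < β2) (hγ1 : 0 < γ1) (hσ1 : 0 < σ1)
    (hβ1γ1 : β1 > γ1) (hε0 : 0 ≤ ε) (hε1 : ε ≤ 1)
    (ω : ℝ → ℝ → ℝ)
    (hω : ∀ i r, ω i r = (N * (β1 - γ1) - β1 * i - β1 * ε * r) * (β2 * i + N * σ1) /
        (β1 * (β2 * i + N * (γ1 + σ1))))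
    (I2 R2 : ℝ) (hI2 : 0 ≤ I2) (hR2 : 0 ≤ R2)
    (hreg : I2 + ε * R2 < N * (1 - 1 / (β1 / γ1))) :
    HasDerivAt (fun i => ω i R2)
      (N * γ1 * (1 + β2 * ω I2 R2 / (β2 * I2 + N * σ1)) / (β2 * I2 + N * (γ1 + σ1)) - 1)
      I2 ∧
    0 < N * γ1 * (1 + β2 * ω I2 R2 / (β2 * I2 + N * σ1)) / (β2 * I2 + N * (γ1 + σ1)) - 1 + 1 :=
  omega_deriv_I2_general N β1 β2 γ1 σ1 ε hN hβ1 hβ2 hγ1 hσ1 ω hω I2 R2 hI2 hreg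
end

section
/- The inequality Rg > Rf, where Rg = Nγ2(β1−γ1)/(β1(σ2+εγ2)) and Rf = N(β2γ1 − β1γ2)/(β2β1(1−ε)), is equivalent (when β2γ1 > β1γ2, β1 > γ1, and 0 ≤ ε < 1) to β1/γ1 > (β2/γ2)·(γ2+σ2)/((1−ε)β2 + εγ2 + σ2), i.e., to R12 > 1. -/
/-! Clearing the positive denominators turns both inequalities into polynomial ones, and the
difference of the two sides of the first is `N β1` times the difference of the two sides of the
second. -/

section

variable {N β1 β2 γ1 γ2 σ2 ε : ℝ}

theorem Rg_sub_Rf_numerator_eq (β1 β2 γ1 γ2 σ2 ε : ℝ) :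
    γ2 * (β1 - γ1) * (β2 * (1 - ε)) - (β2 * γ1 - β1 * γ2) * (σ2 + ε * γ2) =
      β1 * γ2 * ((1 - ε) * β2 + ε * γ2 + σ2) - γ1 * β2 * (γ2 + σ2) := by
  ring

theorem Rf_lt_Rg_iff (hN : 0 < N) (hβ1 : 0 < β1) (hβ2 : 0 < β2) (hγ2 : 0 < γ2)
    (hσ2 : 0 < σ2) (hε0 : 0 ≤ ε) (hε1 : ε < 1) :
    N * (β2 * γ1 - β1 * γ2) / (β2 * β1 * (1 - ε)) < N * γ2 * (β1 - γ1) / (β1 * (σ2 + ε * γ2)) ↔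
      0 < γ2 * (β1 - γ1) * (β2 * (1 - ε)) - (β2 * γ1 - β1 * γ2) * (σ2 + ε * γ2) := by
  have h1ε : 0 < 1 - ε := sub_pos.2 hε1
  rw [div_lt_div_iff₀ (by positivity) (by positivity), ← sub_pos]
  convert mul_pos_iff_of_pos_left (mul_pos hN hβ1) using 2
  ring

theorem R12_gt_one_iff (hγ1 : 0 < γ1) (hγ2 : 0 < γ2) (hD : 0 < (1 - ε) * β2 + ε * γ2 + σ2) :
    β2 / γ2 * ((γ2 + σ2) / ((1 - ε) * β2 + ε * γ2 + σ2)) < β1 / γ1 ↔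
      0 < β1 * γ2 * ((1 - ε) * β2 + ε * γ2 + σ2) - γ1 * β2 * (γ2 + σ2) := by
  rw [div_mul_div_comm, div_lt_div_iff₀ (by positivity) hγ1, ← sub_pos]
  ring_nf

end

theorem Rg_gt_Rf_iff_R12_gt_one_general
    (N β1 β2 γ1 γ2 σ2 ε : ℝ)
    (hN : 0 < N) (hβ1 : 0 < β1) (hβ2 : 0 < β2) (hγ1 : 0 < γ1) (hγ2 : 0 < γ2)
    (hσ2 : 0 < σ2)
    (hε0 : 0 ≤ ε) (hε1 : ε < 1) :
    N * γ2 * (β1 - γ1) / (β1 * (σ2 + ε * γ2)) >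
      N * (β2 * γ1 - β1 * γ2) / (β2 * β1 * (1 - ε)) ↔
    β1 / γ1 > (β2 / γ2) * ((γ2 + σ2) / ((1 - ε) * β2 + ε * γ2 + σ2)) := by
  have hD : 0 < (1 - ε) * β2 + ε * γ2 + σ2 := by
    have : 0 < (1 - ε) * β2 := mul_pos (sub_pos.2 hε1) hβ2
    positivity
  rw [gt_iff_lt, Rf_lt_Rg_iff hN hβ1 hβ2 hγ2 hσ2 hε0 hε1, gt_iff_lt, R12_gt_one_iff hγ1 hγ2 hD,
    Rg_sub_Rf_numerator_eq]

theorem Rg_gt_Rf_iff_R12_gt_one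
    (N β1 β2 γ1 γ2 σ2 ε : ℝ)
    (hN : 0 < N) (hβ1 : 0 < β1) (hβ2 : 0 < β2) (hγ1 : 0 < γ1) (hγ2 : 0 < γ2)
    (hσ2 : 0 < σ2) (hβ1γ1 : β1 > γ1) (hcross : β2 * γ1 > β1 * γ2)
    (hε0 : 0 ≤ ε) (hε1 : ε < 1) :
    N * γ2 * (β1 - γ1) / (β1 * (σ2 + ε * γ2)) >
      N * (β2 * γ1 - β1 * γ2) / (β2 * β1 * (1 - ε)) ↔
    β1 / γ1 > (β2 / γ2) * ((γ2 + σ2) / ((1 - ε) * β2 + ε * γ2 + σ2)) :=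
  Rg_gt_Rf_iff_R12_gt_one_general N β1 β2 γ1 γ2 σ2 ε hN hβ1 hβ2 hγ1 hγ2 hσ2 hε0 hε1
end
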